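/- Uniform limit of maximizers: let u : ℝ^n → ℝ be bounded and continuous, and for ε > 0 suppose x_ε ∈ ℝ^n satisfies u^ε(x) = u(x_ε) - ‖x - x_ε‖²/(2ε) where u^ε is the sup-convolution. Then as ε → 0⁺, (1/ε)‖x - x_ε‖² → 0, x_ε → x, and u^ε(x) → u(x). -/

import Mathlib

open Filter Topology in
theorem supConvolution_maximizer_limits {n : ℕ}
    (u : EuclideanSpace ℝ (Fin n) → ℝ) (hu : Continuous u)
    (M : ℝ) (hbdd : ∀ x, |u x| ≤ M)
    (x : EuclideanSpace ℝ (Fin n))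
    (xe : ℝ → EuclideanSpace ℝ (Fin n))
    (hatt : ∀ ε : ℝ, 0 < ε →
      (⨆ y, (u y - ‖x - y‖ ^ 2 / (2 * ε))) = u (xe ε) - ‖x - xe ε‖ ^ 2 / (2 * ε)) :
    Tendsto (fun ε => (1 / ε) * ‖x - xe ε‖ ^ 2) (𝓝[>] 0) (𝓝 0) ∧
    Tendsto xe (𝓝[>] 0) (𝓝 x) ∧
    Tendsto (fun ε => ⨆ y, (u y - ‖x - y‖ ^ 2 / (2 * ε))) (𝓝[>] 0) (𝓝 (u x)) := by
  set S : ℝ → ℝ := fun ε => ⨆ y, (u y - ‖x - y‖ ^ 2 / (2 * ε)) with hSdef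
  have hbA : ∀ ε : ℝ, 0 < ε →
      BddAbove (Set.range fun y => u y - ‖x - y‖ ^ 2 / (2 * ε)) := by
    intro ε hε
    refine ⟨M, ?_⟩
    rintro _ ⟨y, rfl⟩
    have h1 : 0 ≤ ‖x - y‖ ^ 2 / (2 * ε) := by positivity
    linarith [(abs_le.mp (hbdd y)).2]
  have hlow : ∀ ε : ℝ, 0 < ε → u x ≤ S ε := by
    intro ε hε
    have := le_ciSup (hbA ε hε) x
    simpa using this
  -- monotonicity on Ioi 0
  have hmono : MonotoneOn S (Set.Ioi (0:ℝ)) := by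
    intro a ha b hb hab
    have ha' : (0:ℝ) < a := ha
    have hb' : (0:ℝ) < b := hb
    refine ciSup_mono (hbA b hb) fun y => ?_
    have h1 : ‖x - y‖ ^ 2 / (2 * b) ≤ ‖x - y‖ ^ 2 / (2 * a) := by
      apply div_le_div_of_nonneg_left (by positivity) (by positivity) (by linarith)
    linarith
  have hbdBelow : BddBelow (S '' Set.Ioi (0:ℝ)) := by
    refine ⟨u x, ?_⟩
    rintro _ ⟨ε, hε, rfl⟩
    exact hlow ε hε
  set L : ℝ := sInf (S '' Set.Ioi (0:ℝ)) with hLdef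
  have hStend : Tendsto S (𝓝[>] 0) (𝓝 L) :=
    hmono.tendsto_nhdsGT hbdBelow
  have h2ε : Tendsto (fun ε : ℝ => 2 * ε) (𝓝[>] 0) (𝓝[>] 0) := by
    apply tendsto_nhdsWithin_of_tendsto_nhds_of_eventually_within
    · have : Tendsto (fun ε : ℝ => 2 * ε) (𝓝 0) (𝓝 (2 * 0)) :=
        (tendsto_const_nhds.mul tendsto_id)
      simpa using this.mono_left nhdsWithin_le_nhds
    · filter_upwards [self_mem_nhdsWithin] with ε (hε : (0:ℝ) < ε)
      exact mul_pos two_pos hε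
  have hS2tend : Tendsto (fun ε => S (2 * ε)) (𝓝[>] 0) (𝓝 L) := hStend.comp h2ε
  -- key inequality
  have hkey : ∀ ε : ℝ, 0 < ε → ‖x - xe ε‖ ^ 2 / (4 * ε) ≤ S (2 * ε) - S ε := by
    intro ε hε
    have h1 : u (xe ε) - ‖x - xe ε‖ ^ 2 / (2 * (2 * ε)) ≤ S (2 * ε) := by
      have := le_ciSup (hbA (2 * ε) (by linarith)) (xe ε)
      simpa using this
    have h2 : S ε = u (xe ε) - ‖x - xe ε‖ ^ 2 / (2 * ε) := hatt ε hε
    have h3 : ‖x - xe ε‖ ^ 2 / (2 * (2 * ε)) = ‖x - xe ε‖ ^ 2 / (4 * ε) := by ring_nf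
    have h4 : ‖x - xe ε‖ ^ 2 / (2 * ε) = 2 * (‖x - xe ε‖ ^ 2 / (4 * ε)) := by
      field_simp; ring
    rw [h3] at h1
    linarith
  -- first limit
  have hT1 : Tendsto (fun ε => (1 / ε) * ‖x - xe ε‖ ^ 2) (𝓝[>] 0) (𝓝 0) := by
    have hg : Tendsto (fun ε => 4 * (S (2 * ε) - S ε)) (𝓝[>] 0) (𝓝 0) := by
      have := ((hS2tend.sub hStend).const_mul (4:ℝ))
      simpa using this
    refine squeeze_zero' ?_ ?_ hg
    · filter_upwards [self_mem_nhdsWithin] with ε (hε : (0:ℝ) < ε)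
      positivity
    · filter_upwards [self_mem_nhdsWithin] with ε (hε : (0:ℝ) < ε)
      have := hkey ε hε
      have h4 : (1 / ε) * ‖x - xe ε‖ ^ 2 = 4 * (‖x - xe ε‖ ^ 2 / (4 * ε)) := by
        field_simp
      rw [h4]
      linarith
  -- xe → x
  have hsq : Tendsto (fun ε => ‖x - xe ε‖ ^ 2) (𝓝[>] 0) (𝓝 0) := by
    have hεid : Tendsto (fun ε : ℝ => ε) (𝓝[>] 0) (𝓝 0) :=
      tendsto_id.mono_left nhdsWithin_le_nhds
    have := hεid.mul hT1
    rw [mul_zero] at this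
    refine this.congr' ?_
    filter_upwards [self_mem_nhdsWithin] with ε (hε : (0:ℝ) < ε)
    field_simp
  have hxe : Tendsto xe (𝓝[>] 0) (𝓝 x) := by
    rw [tendsto_iff_norm_sub_tendsto_zero]
    have hsqrt : Tendsto (fun ε => Real.sqrt (‖x - xe ε‖ ^ 2)) (𝓝[>] 0) (𝓝 0) := by
      have := (Real.continuous_sqrt.tendsto 0).comp hsq
      simpa [Function.comp_def] using this
    refine hsqrt.congr fun ε => ?_
    rw [Real.sqrt_sq (norm_nonneg _), norm_sub_rev]
  -- S → u x
  have huxe : Tendsto (fun ε => u (xe ε)) (𝓝[>] 0) (𝓝 (u x)) :=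
    (hu.tendsto x).comp hxe
  have hrem : Tendsto (fun ε => ‖x - xe ε‖ ^ 2 / (2 * ε)) (𝓝[>] 0) (𝓝 0) := by
    have := hT1.const_mul (1/2 : ℝ)
    rw [mul_zero] at this
    refine this.congr' ?_
    filter_upwards [self_mem_nhdsWithin] with ε (hε : (0:ℝ) < ε)
    field_simp
  have := huxe.sub hrem
  rw [sub_zero] at this
  refine ⟨hT1, hxe, this.congr' ?_⟩
  filter_upwards [self_mem_nhdsWithin] with ε (hε : (0:ℝ) < ε)
  exact (hatt ε hε).symm
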